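/- Let Q = y_i y_j ⟨x_i, x_j⟩ be the Gram matrix with ‖x_i‖ ≤ 1 and (1/n)‖Q‖ ≤ σ², and fix β_b = 1 + (b-1)(nσ²-1)/(n-1). Define D(α) = -(1/(2λn²))(αᵀQα) + (1/n)∑α_i and H(δ, α) = -(1/(2λn²))(αᵀQα + 2αᵀQδ + β_b‖δ‖²) + (1/n)∑(α_i + δ_i). Then for any α, δ ∈ ℝⁿ and A a uniformly random b-subset of {1,…,n}: E_A[D(α + δ_{[A]})] ≥ (1 - b/n) D(α) + (b/n) H(δ, α). -/

import Mathlib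

open Finset

/-- The SVM dual objective `D(α) = -(1/(2λn²)) αᵀQα + (1/n)∑ α_i`. -/
noncomputable def dualD (lam : ℝ) (n : ℕ) (Q : Matrix (Fin n) (Fin n) ℝ)
    (α : Fin n → ℝ) : ℝ :=
  -(1 / (2 * lam * (n : ℝ) ^ 2)) * (∑ i, ∑ j, α i * Q i j * α j)
    + (1 / (n : ℝ)) * ∑ i, α i

/-- The separable approximation
`H(δ,α) = -(1/(2λn²))(αᵀQα + 2αᵀQδ + β_b‖δ‖²) + (1/n)∑(α_i+δ_i)`. -/
noncomputable def sepH (lam : ℝ) (n : ℕ) (Q : Matrix (Fin n) (Fin n) ℝ)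
    (βb : ℝ) (δ α : Fin n → ℝ) : ℝ :=
  -(1 / (2 * lam * (n : ℝ) ^ 2)) *
      ((∑ i, ∑ j, α i * Q i j * α j) + 2 * (∑ i, ∑ j, α i * Q i j * δ j)
        + βb * ∑ i, (δ i) ^ 2)
    + (1 / (n : ℝ)) * ∑ i, (α i + δ i)

/-!
Expanding the quadratic form, `D(α + δ_[A]) = D(α) - c (2 αᵀQδ_[A] + δ_[A]ᵀQδ_[A]) + (1/n) ∑ δ_[A]`
with `c = 1/(2λn²)`, and `δ_[A]` enters linearly except in the second moment. A fixed index lies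
in a fraction `b/n` of the `b`-subsets, a fixed pair of distinct indices in a fraction
`b(b-1)/(n(n-1))`; hence `E[δ_[A]] = (b/n) δ`, and `E[δ_[A]ᵀQδ_[A]]` is a combination, with
nonnegative weights, of `δᵀQδ ≤ ‖Q‖ ‖δ‖² ≤ nσ² ‖δ‖²` and of `∑ Q_ii δ_i² ≤ ‖δ‖²` (as
`Q_ii = ‖x_i‖² ≤ 1`). The two weights add up to `(b/n) β_b`. Here `δ_[A]` is `A.piecewise δ 0`.
-/

open Matrix

theorem dotProduct_mulVec_self_le_opNorm {ι : Type*} [Fintype ι] [DecidableEq ι]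
    (Q : Matrix ι ι ℝ) (v : ι → ℝ) :
    v ⬝ᵥ Q *ᵥ v ≤ ‖toEuclideanCLM (𝕜 := ℝ) Q‖ * ∑ i, v i ^ 2 := by
  set T := toEuclideanCLM (𝕜 := ℝ) Q
  set x := WithLp.toLp 2 v
  calc v ⬝ᵥ Q *ᵥ v = inner ℝ x (T x) := (inner_toEuclideanCLM Q x x).symm
    _ ≤ ‖x‖ * ‖T x‖ := real_inner_le_norm _ _
    _ ≤ ‖x‖ * (‖T‖ * ‖x‖) := by gcongr; exact T.le_opNorm x
    _ = ‖T‖ * ∑ i, v i ^ 2 := by rw [← EuclideanSpace.real_norm_sq_eq]; ring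

theorem sum_sum_mul_mul_eq_dotProduct_mulVec {ι R : Type*} [Fintype ι] [NonUnitalSemiring R]
    (Q : Matrix ι ι R) (u v : ι → R) : ∑ i, ∑ j, u i * Q i j * v j = u ⬝ᵥ Q *ᵥ v := by
  rw [dot_mulVec_eq_sum_sum, sum_comm]

section RandomSubset

variable {ι : Type*} [Fintype ι] [DecidableEq ι]

theorem descFactorial_mul_card_filter_superset_powersetCard (b : ℕ) (t : Finset ι) :
    (Fintype.card ι).descFactorial #t * #{A ∈ powersetCard b univ | t ⊆ A}
      = b.descFactorial #t * (Fintype.card ι).choose b := by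
  rcases le_or_gt #t b with htb | hbt
  · rw [card_filter_powersetCard_subset t univ b (subset_univ t) htb, card_univ,
      Nat.descFactorial_eq_factorial_mul_choose, Nat.descFactorial_eq_factorial_mul_choose,
      mul_assoc, mul_assoc, mul_comm (b.choose _), Nat.choose_mul htb]
  · rw [Nat.descFactorial_eq_zero_iff_lt.mpr hbt, zero_mul, mul_eq_zero, card_eq_zero,
      filter_eq_empty_iff]
    refine Or.inr fun A hA htA => hbt.not_ge ?_
    simpa [(mem_powersetCard.1 hA).2] using card_le_card htA

theorem card_filter_mem_powersetCard (b : ℕ) (i : ι) :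
    (#{A ∈ powersetCard b univ | i ∈ A} : ℝ)
      = b / Fintype.card ι * (Fintype.card ι).choose b := by
  have h := descFactorial_mul_card_filter_superset_powersetCard b {i}
  simp only [card_singleton, Nat.descFactorial_one, singleton_subset_iff] at h
  have hι : (Fintype.card ι : ℝ) ≠ 0 := Nat.cast_ne_zero.2 (Fintype.card_pos_iff.2 ⟨i⟩).ne'
  field_simp
  exact_mod_cast (mul_comm _ _).trans h

theorem card_filter_mem_mem_powersetCard (b : ℕ) {i j : ι} (hij : i ≠ j) :
    (#{A ∈ powersetCard b univ | i ∈ A ∧ j ∈ A} : ℝ)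
      = b * (b - 1) / (Fintype.card ι * (Fintype.card ι - 1)) * (Fintype.card ι).choose b := by
  have h := congrArg (Nat.cast (R := ℝ))
    (descFactorial_mul_card_filter_superset_powersetCard b {i, j})
  simp only [card_pair hij, insert_subset_iff, singleton_subset_iff, Nat.cast_mul,
    Nat.cast_descFactorial_two] at h
  have hι : (2 : ℝ) ≤ Fintype.card ι := by exact_mod_cast card_pair hij ▸ card_le_univ {i, j}
  have : (Fintype.card ι : ℝ) * (Fintype.card ι - 1) ≠ 0 := by nlinarith
  rw [div_mul_eq_mul_div, eq_div_iff this]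
  linarith

theorem sum_powersetCard_piecewise (b : ℕ) (δ : ι → ℝ) :
    ∑ A ∈ powersetCard b univ, A.piecewise δ 0
      = (b / Fintype.card ι * (Fintype.card ι).choose b : ℝ) • δ := by
  ext i
  simp only [Finset.sum_apply, piecewise, Pi.zero_apply, Pi.smul_apply, smul_eq_mul]
  rw [← sum_filter, sum_const, nsmul_eq_mul, card_filter_mem_powersetCard]

theorem sum_piecewise_dotProduct_mulVec_piecewise (S : Finset (Finset ι)) (Q : Matrix ι ι ℝ)
    (δ : ι → ℝ) :
    ∑ A ∈ S, A.piecewise δ 0 ⬝ᵥ Q *ᵥ A.piecewise δ 0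
      = ∑ i, ∑ j, #{A ∈ S | i ∈ A ∧ j ∈ A} * (δ i * Q i j * δ j) := by
  have hterm : ∀ (A : Finset ι) i j, A.piecewise δ 0 i * Q i j * A.piecewise δ 0 j
      = if i ∈ A ∧ j ∈ A then δ i * Q i j * δ j else 0 := by
    intro A i j
    by_cases hi : i ∈ A <;> by_cases hj : j ∈ A <;> simp [hi, hj]
  simp_rw [dot_mulVec_eq_sum_sum, hterm, ← nsmul_eq_mul, ← sum_const, sum_filter]
  exact sum_comm.trans ((sum_congr rfl fun _ _ => sum_comm).trans sum_comm)

theorem sum_powersetCard_dotProduct_mulVec_piecewise (Q : Matrix ι ι ℝ) (b : ℕ) (δ : ι → ℝ)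
    {i₀ j₀ : ι} (hij₀ : i₀ ≠ j₀) :
    ∑ A ∈ powersetCard b univ, A.piecewise δ 0 ⬝ᵥ Q *ᵥ A.piecewise δ 0
      = #{A ∈ powersetCard b univ | i₀ ∈ A ∧ j₀ ∈ A} * (δ ⬝ᵥ Q *ᵥ δ)
        + (#{A ∈ powersetCard b univ | i₀ ∈ A} - #{A ∈ powersetCard b univ | i₀ ∈ A ∧ j₀ ∈ A} : ℝ)
          * ∑ i, Q i i * δ i ^ 2 := by
  set N₁ : ℝ := ((#{A ∈ powersetCard b univ | i₀ ∈ A} : ℕ) : ℝ) with hN₁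
  set N₂ : ℝ := ((#{A ∈ powersetCard b univ | i₀ ∈ A ∧ j₀ ∈ A} : ℕ) : ℝ) with hN₂
  clear_value N₁ N₂
  have hcount : ∀ i j : ι, (#{A ∈ powersetCard b univ | i ∈ A ∧ j ∈ A} : ℝ)
      = N₂ + if i = j then N₁ - N₂ else 0 := by
    intro i j
    rcases eq_or_ne i j with rfl | hij
    · rw [if_pos rfl, add_sub_cancel, hN₁, card_filter_mem_powersetCard]
      simp only [and_self, card_filter_mem_powersetCard]
    · rw [if_neg hij, add_zero, hN₂, card_filter_mem_mem_powersetCard b hij,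
        card_filter_mem_mem_powersetCard b hij₀]
  simp only [sum_piecewise_dotProduct_mulVec_piecewise, hcount, add_mul, sum_add_distrib, ite_mul,
    zero_mul, sum_ite_eq, mem_univ, if_true]
  rw [dot_mulVec_eq_sum_sum, mul_sum, mul_sum]
  simp only [mul_sum]
  congr 1
  · exact sum_comm
  · exact sum_congr rfl fun i _ => by ring

theorem sum_powersetCard_dotProduct_mulVec_piecewise_le {Q : Matrix ι ι ℝ} {s : ℝ}
    (hι : 2 ≤ Fintype.card ι) (hdiag : ∀ i, Q i i ≤ 1)
    (b : ℕ) {δ : ι → ℝ} (hs : δ ⬝ᵥ Q *ᵥ δ ≤ s * ∑ i, δ i ^ 2) :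
    ∑ A ∈ powersetCard b univ, A.piecewise δ 0 ⬝ᵥ Q *ᵥ A.piecewise δ 0
      ≤ (Fintype.card ι).choose b *
          (b / Fintype.card ι * (1 + (b - 1) * (s - 1) / (Fintype.card ι - 1))) *
          ∑ i, δ i ^ 2 := by
  obtain ⟨i₀, j₀, hij₀⟩ := Fintype.exists_pair_of_one_lt_card hι
  rw [sum_powersetCard_dotProduct_mulVec_piecewise Q b δ hij₀]
  set N₁ : ℝ := ((#{A ∈ powersetCard b univ | i₀ ∈ A} : ℕ) : ℝ) with hN₁
  set N₂ : ℝ := ((#{A ∈ powersetCard b univ | i₀ ∈ A ∧ j₀ ∈ A} : ℕ) : ℝ) with hN₂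
  have hN₂₁ : N₂ ≤ N₁ := Nat.cast_le.2 <| card_le_card fun A hA => by
    simp only [mem_filter] at hA ⊢
    exact ⟨hA.1, hA.2.1⟩
  have hdiag_sum : ∑ i, Q i i * δ i ^ 2 ≤ ∑ i, δ i ^ 2 :=
    sum_le_sum fun i _ => mul_le_of_le_one_left (sq_nonneg _) (hdiag i)
  calc _ ≤ N₂ * (s * ∑ i, δ i ^ 2) + (N₁ - N₂) * ∑ i, δ i ^ 2 :=
        add_le_add (mul_le_mul_of_nonneg_left hs (Nat.cast_nonneg _))
          (mul_le_mul_of_nonneg_left hdiag_sum (sub_nonneg.2 hN₂₁))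
    _ = _ := by
        have hn : (2 : ℝ) ≤ Fintype.card ι := by exact_mod_cast hι
        have : (Fintype.card ι : ℝ) - 1 ≠ 0 := by linarith
        rw [hN₁, hN₂, card_filter_mem_powersetCard, card_filter_mem_mem_powersetCard b hij₀]
        field_simp
        ring

end RandomSubset

section DualObjective

variable {lam : ℝ} {n : ℕ} {Q : Matrix (Fin n) (Fin n) ℝ}

theorem dualD_eq (α : Fin n → ℝ) :
    dualD lam n Q α = -(1 / (2 * lam * n ^ 2)) * (α ⬝ᵥ Q *ᵥ α) + 1 / n * ∑ i, α i := by
  rw [dualD, sum_sum_mul_mul_eq_dotProduct_mulVec]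

theorem dualD_add (hQ : Q.IsSymm) (α h : Fin n → ℝ) :
    dualD lam n Q (α + h) = dualD lam n Q α
      - 1 / (2 * lam * n ^ 2) * (2 * (α ⬝ᵥ Q *ᵥ h) + h ⬝ᵥ Q *ᵥ h) + 1 / n * ∑ i, h i := by
  have hswap : h ⬝ᵥ Q *ᵥ α = α ⬝ᵥ Q *ᵥ h := by
    rw [dotProduct_mulVec, dotProduct_comm, ← mulVec_transpose, hQ.eq]
  simp only [dualD_eq, add_dotProduct, dotProduct_add, mulVec_add, Pi.add_apply, sum_add_distrib,
    hswap]
  ring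

theorem sepH_eq (βb : ℝ) (δ α : Fin n → ℝ) :
    sepH lam n Q βb δ α = dualD lam n Q α
      - 1 / (2 * lam * n ^ 2) * (2 * (α ⬝ᵥ Q *ᵥ δ) + βb * ∑ i, δ i ^ 2) + 1 / n * ∑ i, δ i := by
  simp only [sepH, dualD, sum_sum_mul_mul_eq_dotProduct_mulVec, sum_add_distrib]
  ring

theorem sum_powersetCard_dualD_add_piecewise (hQ : Q.IsSymm) (b : ℕ) (α δ : Fin n → ℝ) :
    ∑ A ∈ powersetCard b univ, dualD lam n Q (α + A.piecewise δ 0)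
      = n.choose b * (dualD lam n Q α - 1 / (2 * lam * n ^ 2) * (2 * (b / n) * (α ⬝ᵥ Q *ᵥ δ))
          + 1 / n * (b / n) * ∑ i, δ i)
        - 1 / (2 * lam * n ^ 2) *
          ∑ A ∈ powersetCard b univ, A.piecewise δ 0 ⬝ᵥ Q *ᵥ A.piecewise δ 0 := by
  have hlin := sum_powersetCard_piecewise b δ
  rw [Fintype.card_fin] at hlin
  have hdot : ∑ A ∈ powersetCard b univ, α ⬝ᵥ Q *ᵥ A.piecewise δ 0
      = n.choose b * (b / n) * (α ⬝ᵥ Q *ᵥ δ) := by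
    rw [← dotProduct_sum, ← mulVec_sum, hlin, mulVec_smul, dotProduct_smul, smul_eq_mul]; ring
  have hsum : ∑ A ∈ powersetCard b univ, ∑ i, A.piecewise δ 0 i
      = n.choose b * (b / n) * ∑ i, δ i := by
    rw [sum_comm]
    simp only [← Finset.sum_apply, hlin, Pi.smul_apply, smul_eq_mul, ← mul_sum]
    ring
  simp only [dualD_add hQ, sum_add_distrib, sum_sub_distrib, sum_const, card_powersetCard,
    card_univ, Fintype.card_fin, nsmul_eq_mul, ← mul_sum, mul_add, hdot, hsum]
  ring

end DualObjective

theorem stmt9_general (n b d : ℕ) (hn : 2 ≤ n) (hbn : b ≤ n)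
    (lam : ℝ) (hlam : 0 < lam)
    (x : Fin n → EuclideanSpace ℝ (Fin d)) (y : Fin n → ℝ)
    (hy : ∀ i, y i = 1 ∨ y i = -1) (hx : ∀ i, ‖x i‖ ≤ 1)
    (Q : Matrix (Fin n) (Fin n) ℝ)
    (hQ : ∀ i j, Q i j = y i * y j * (inner ℝ (x i) (x j) : ℝ))
    (σ2 : ℝ)
    (hspec : (1 / (n : ℝ)) * ‖Matrix.toEuclideanCLM (𝕜 := ℝ) Q‖ ≤ σ2)
    (α δ : Fin n → ℝ) :
    (∑ A ∈ Finset.powersetCard b (Finset.univ : Finset (Fin n)),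
        dualD lam n Q (fun i => α i + if i ∈ A then δ i else 0))
      / (n.choose b : ℝ)
    ≥ (1 - (b : ℝ) / n) * dualD lam n Q α
      + ((b : ℝ) / n) *
          sepH lam n Q (1 + ((b : ℝ) - 1) * ((n : ℝ) * σ2 - 1) / ((n : ℝ) - 1))
            δ α := by
  have hsymm : Q.IsSymm := IsSymm.ext fun i j => by rw [hQ, hQ, real_inner_comm]; ring
  have hdiag : ∀ i, Q i i ≤ 1 := fun i => by
    have hyy : y i * y i = 1 := by rcases hy i with h | h <;> simp [h]
    rw [hQ, hyy, one_mul, real_inner_self_eq_norm_sq]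
    exact pow_le_one₀ (norm_nonneg _) (hx i)
  have hnorm : ‖toEuclideanCLM (𝕜 := ℝ) Q‖ ≤ n * σ2 := by
    have : (0 : ℝ) < n := by positivity
    rwa [one_div, inv_mul_le_iff₀ this] at hspec
  have hmoment := sum_powersetCard_dotProduct_mulVec_piecewise_le (by rwa [Fintype.card_fin])
    hdiag b ((dotProduct_mulVec_self_le_opNorm Q δ).trans
      (mul_le_mul_of_nonneg_right hnorm (sum_nonneg fun i _ => sq_nonneg (δ i))))
  rw [Fintype.card_fin] at hmoment
  have hC : (0 : ℝ) < n.choose b := by exact_mod_cast Nat.choose_pos hbn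
  have hc : 0 ≤ 1 / (2 * lam * n ^ 2) := by positivity
  change (∑ A ∈ powersetCard b univ, dualD lam n Q (α + A.piecewise δ 0)) / _ ≥ _
  rw [ge_iff_le, le_div_iff₀ hC, sum_powersetCard_dualD_add_piecewise hsymm, sepH_eq]
  linarith [mul_le_mul_of_nonneg_left hmoment hc]

/-- Lemma 3: `E_A[D(α + δ_{[A]})] ≥ (1 - b/n) D(α) + (b/n) H(δ, α)` for a
uniformly random `b`-subset `A`, with `Q` the Gram matrix of data with
`‖x_i‖ ≤ 1` and `(1/n)‖Q‖ ≤ σ²`, and `β_b = 1 + (b-1)(nσ²-1)/(n-1)`. -/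
theorem stmt9 (n b d : ℕ) (hn : 2 ≤ n) (hb1 : 1 ≤ b) (hbn : b ≤ n)
    (lam : ℝ) (hlam : 0 < lam)
    (x : Fin n → EuclideanSpace ℝ (Fin d)) (y : Fin n → ℝ)
    (hy : ∀ i, y i = 1 ∨ y i = -1) (hx : ∀ i, ‖x i‖ ≤ 1)
    (Q : Matrix (Fin n) (Fin n) ℝ)
    (hQ : ∀ i j, Q i j = y i * y j * (inner ℝ (x i) (x j) : ℝ))
    (σ2 : ℝ) (hσ : 1 / (n : ℝ) ≤ σ2)
    (hspec : (1 / (n : ℝ)) * ‖Matrix.toEuclideanCLM (𝕜 := ℝ) Q‖ ≤ σ2)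
    (α δ : Fin n → ℝ) :
    (∑ A ∈ Finset.powersetCard b (Finset.univ : Finset (Fin n)),
        dualD lam n Q (fun i => α i + if i ∈ A then δ i else 0))
      / (n.choose b : ℝ)
    ≥ (1 - (b : ℝ) / n) * dualD lam n Q α
      + ((b : ℝ) / n) *
          sepH lam n Q (1 + ((b : ℝ) - 1) * ((n : ℝ) * σ2 - 1) / ((n : ℝ) - 1))
            δ α :=
  stmt9_general n b d hn hbn lam hlam x y hy hx Q hQ σ2 hspec α δ
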